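/- Let C ⊆ ℝⁿ be a regular open convex cone and let C* be its conjugate cone. For every z = x + iy in the tube T^C = ℝⁿ + iC, the function u ↦ e^{2πi z·u} is integrable over C*, so the Cauchy–Szegő kernel K(z) = ∫_{C*} e^{2πi z·u} du is well defined. -/

import Mathlib

open MeasureTheory Complex Filter Topology
open scoped ENNReal NNReal

noncomputable section

abbrev Rn (n : ℕ) := Fin n → ℝ
abbrev Cn (n : ℕ) := Fin n → ℂ

/-- The complex bilinear pairing `z · u = ∑ z_j u_j`. -/
def tubeDot {n : ℕ} (z : Cn n) (u : Rn n) : ℂ := ∑ j, z j * (u j : ℂ)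

/-- The conjugate (dual) cone `C* = {u : u·x ≥ 0 for all x ∈ C}`. -/
def conjCone {n : ℕ} (C : Set (Rn n)) : Set (Rn n) :=
  {u | ∀ x ∈ C, 0 ≤ ∑ j, u j * x j}

/-- An open convex cone with vertex at the origin. -/
def IsOpenConvexCone {n : ℕ} (C : Set (Rn n)) : Prop :=
  IsOpen C ∧ Convex ℝ C ∧ C.Nonempty ∧ ∀ t : ℝ, 0 < t → ∀ x ∈ C, t • x ∈ C

/-- A regular cone: an open convex cone whose closure contains no entire straight line. -/
def IsRegularCone {n : ℕ} (C : Set (Rn n)) : Prop :=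
  IsOpenConvexCone C ∧ ¬ ∃ a b : Rn n, b ≠ 0 ∧ ∀ t : ℝ, a + t • b ∈ closure C

/-- The tube domain `T^C = ℝⁿ + iC`. -/
def tube {n : ℕ} (C : Set (Rn n)) : Set (Cn n) := {z | (fun j => (z j).im) ∈ C}

/-- The point `x + iy ∈ ℂⁿ`. -/
def tmk {n : ℕ} (x y : Rn n) : Cn n := fun j => ⟨x j, y j⟩

/-- The Cauchy–Szegő kernel `K(z) = ∫_{C*} e^{2πi z·u} du`. -/
def szego {n : ℕ} (C : Set (Rn n)) (z : Cn n) : ℂ :=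
  ∫ u in conjCone C, Complex.exp (2 * Real.pi * I * tubeDot z u)

/-- The Poisson kernel `Q(z;u) = |K(z-u)|²/K(2iy)`. -/
def poisson {n : ℕ} (C : Set (Rn n)) (z : Cn n) (u : Rn n) : ℂ :=
  ((‖szego C (z - (fun j => (u j : ℂ)))‖) ^ 2 : ℝ) /
    szego C (fun j => (2 * I) * ((z j).im : ℂ))

/-- Test functions: smooth compactly supported. -/
def IsTestFun {n : ℕ} (φ : Rn n → ℝ) : Prop := ContDiff ℝ (⊤ : ℕ∞) φ ∧ HasCompactSupport φ

/-- Membership in the `X`-valued Hardy space `H^p(T^C, X)`. -/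
def MemHardy {n : ℕ} {X : Type} [NormedAddCommGroup X] [NormedSpace ℂ X]
    (C : Set (Rn n)) (p : ℝ≥0∞) (F : Cn n → X) : Prop :=
  DifferentiableOn ℂ F (tube C) ∧
    ∃ M : ℝ≥0∞, M ≠ ⊤ ∧ ∀ y ∈ C, eLpNorm (fun x => F (tmk x y)) p volume ≤ M

/-- `F` has the distributional boundary value `f`: for every test function `φ`,
`∫ F(x+iy)φ(x) dx → ∫ f(x)φ(x) dx` in `X` as `y → 0` within `C`. -/
def HasDistBV {n : ℕ} {X : Type} [NormedAddCommGroup X] [NormedSpace ℂ X]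
    (C : Set (Rn n)) (F : Cn n → X) (f : Rn n → X) : Prop :=
  ∀ φ : Rn n → ℝ, IsTestFun φ →
    Tendsto (fun y => ∫ x, φ x • F (tmk x y)) (𝓝[C] (0 : Rn n))
      (𝓝 (∫ x, φ x • f x))

theorem aux_exp_abs {c : ℝ} (hc : 0 < c) :
    Integrable (fun x : ℝ => Real.exp (-c * |x|)) := by
  have h1 : IntegrableOn (fun x : ℝ => Real.exp (-c * |x|)) (Set.Ioi 0) := by
    refine (exp_neg_integrableOn_Ioi 0 hc).congr_fun (fun x hx => ?_) measurableSet_Ioi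
    rw [abs_of_pos hx]
  have h2 : IntegrableOn (fun x : ℝ => Real.exp (-c * |x|)) (Set.Iic 0) := by
    rw [IntegrableOn, ← Measure.map_neg_eq_self (volume : Measure ℝ)]
    have m : MeasurableEmbedding fun x : ℝ => -x := (Homeomorph.neg ℝ).measurableEmbedding
    rw [Measure.restrict_map m.measurable measurableSet_Iic, m.integrable_map_iff]
    simp_rw [Function.comp_def, abs_neg, Set.neg_preimage, Set.neg_Iic, neg_zero]
    exact Iff.mpr integrableOn_Ici_iff_integrableOn_Ioi h1
  rw [← integrableOn_univ, ← Set.Iic_union_Ioi (a := (0:ℝ))]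
  exact h2.union h1

theorem aux_key {n : ℕ} {C : Set (Rn n)} (hopen : IsOpen C) {y : Rn n} (hy : y ∈ C) :
    ∃ ε > 0, ∀ u ∈ conjCone C, ε * ∑ j, |u j| ≤ ∑ j, u j * y j := by
  obtain ⟨ε, hε, hball⟩ := Metric.isOpen_iff.1 hopen y hy
  refine ⟨ε / 2, by positivity, fun u hu => ?_⟩
  set v : Rn n := fun j => y j - (ε / 2) * Real.sign (u j) with hv
  have hvball : v ∈ C := by
    apply hball
    rw [Metric.mem_ball, dist_pi_lt_iff hε]
    intro i
    have hs : |Real.sign (u i)| ≤ 1 := by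
      rcases lt_trichotomy (u i) 0 with h | h | h
      · simp [Real.sign_of_neg h]
      · simp [h, Real.sign_zero]
      · simp [Real.sign_of_pos h]
    rw [Real.dist_eq]
    have : |y i - ε / 2 * Real.sign (u i) - y i| ≤ ε / 2 := by
      rw [sub_sub_cancel_left, abs_neg, abs_mul, abs_of_pos (by positivity : (0:ℝ) < ε / 2)]
      nlinarith
    calc |v i - y i| ≤ ε / 2 := this
      _ < ε := by linarith
  have h0 := hu v hvball
  have hsum : ∑ j, u j * v j = (∑ j, u j * y j) - (ε/2) * ∑ j, |u j| := by
    rw [Finset.mul_sum, ← Finset.sum_sub_distrib]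
    refine Finset.sum_congr rfl fun j _ => ?_
    have habs : u j * Real.sign (u j) = |u j| := by
      rcases lt_trichotomy (u j) 0 with h | h | h
      · rw [Real.sign_of_neg h, abs_of_neg h]; ring
      · simp [h]
      · rw [Real.sign_of_pos h, abs_of_pos h]; ring
    rw [hv]
    simp only
    nlinarith [habs]
  linarith [hsum ▸ h0]

theorem conjCone_isClosed {n : ℕ} (C : Set (Rn n)) : IsClosed (conjCone C) := by
  have : conjCone C = ⋂ x ∈ C, {u : Rn n | 0 ≤ ∑ j, u j * x j} := by
    ext u; simp [conjCone]
  rw [this]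
  exact isClosed_biInter fun x _ => isClosed_le continuous_const
    (continuous_finset_sum _ fun j _ => (continuous_apply j).mul continuous_const)

/-- For a regular open convex cone `C` and `z ∈ T^C`, the function
`u ↦ e^{2πi z·u}` is integrable over the conjugate cone `C*`, so the Cauchy–Szegő kernel
`K(z) = ∫_{C*} e^{2πi z·u} du` is well defined. -/
theorem szego_integrand_integrable {n : ℕ} (C : Set (Rn n)) (hC : IsRegularCone C)
    (z : Cn n) (hz : z ∈ tube C) :
    MeasureTheory.IntegrableOn
      (fun u : Rn n => Complex.exp (2 * Real.pi * I * tubeDot z u)) (conjCone C) volume := by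
  set y : Rn n := fun j => (z j).im with hy
  obtain ⟨ε, hε, hkey⟩ := aux_key hC.1.1 hz
  have hmeas : MeasurableSet (conjCone C) := (conjCone_isClosed C).measurableSet
  have hcont : Continuous fun u : Rn n => Complex.exp (2 * Real.pi * I * tubeDot z u) := by
    exact Complex.continuous_exp.comp (continuous_const.mul
      (continuous_finset_sum _ fun j _ =>
        continuous_const.mul (Complex.continuous_ofReal.comp (continuous_apply j))))
  have hg : Integrable (fun u : Rn n => ∏ j, Real.exp (-(2 * Real.pi * ε) * |u j|)) :=
    Integrable.fintype_prod fun _ => aux_exp_abs (by positivity)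
  refine hg.integrableOn.mono' (hcont.aestronglyMeasurable.restrict) ?_
  refine ae_restrict_of_forall_mem hmeas fun u hu => ?_
  have hre : (2 * (Real.pi : ℂ) * I * tubeDot z u).re = -(2 * Real.pi) * ∑ j, (z j).im * u j := by
    have him : (tubeDot z u).im = ∑ j, (z j).im * u j := by
      rw [tubeDot, Complex.im_sum]
      exact Finset.sum_congr rfl fun j _ => by simp [Complex.mul_im]
    have hr : (2 * (Real.pi : ℂ) * I * tubeDot z u).re = -(2 * Real.pi) * (tubeDot z u).im := by
      simp [Complex.mul_re, Complex.mul_im]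
    rw [hr, him]
  rw [Complex.norm_exp, hre]
  have hsum : ∑ j, (z j).im * u j = ∑ j, u j * y j :=
    Finset.sum_congr rfl fun j _ => mul_comm _ _
  have hb := hkey u hu
  have hprod : ∏ j, Real.exp (-(2 * Real.pi * ε) * |u j|)
      = Real.exp (-(2 * Real.pi * ε) * ∑ j, |u j|) := by
    rw [← Real.exp_sum, Finset.mul_sum]
  rw [hprod]
  apply Real.exp_le_exp.2
  rw [hsum]
  nlinarith [Real.pi_pos]
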